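/- arXiv:1504.05283 — 2 statements merged into one kernel-verified Lean document; each statement's English description precedes it below -/
import Mathlib

section
/- Let g ~ Gamma(M, 1) for integer M ≥ 1 and I ≥ 0 independent of g with all moments E[I^n e^{-sI}] finite. Then the outage probability satisfies Pr(g ≤ s·I) = Σ_{n=M}^∞ (s^n/n!) E[I^n e^{-s I}] for s > 0, where the series converges. -/
open MeasureTheory ProbabilityTheory
open scoped BigOperators

/-!
Conditioning on `I`, the outage probability is `E[F(s I)]` with `F` the CDF of `Gamma(M, 1)`. For
integer `M`, the `M`-th arrival of a unit-rate Poisson process falls before `t` iff at least `M`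
arrivals occur in `[0, t]`, so `F(t) = ∑_{n ≥ M} e^{-t} tⁿ / n!`; this is checked by differentiating
`e^{-t} ∑_{k < M} tᵏ / k!`. Tonelli exchanges the expectation with this series of nonnegative
terms, and finiteness of the probability makes the real series converge.
-/

open Real Set Finset Nat

lemma hasDerivAt_exp_neg_mul_sum_range (N : ℕ) (x : ℝ) :
    HasDerivAt (fun x : ℝ ↦ exp (-x) * ∑ k ∈ range (N + 1), x ^ k / k !)
      (-(x ^ N / N ! * exp (-x))) x := by
  have hsum : HasDerivAt (fun x : ℝ ↦ ∑ k ∈ range (N + 1), x ^ k / k !)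
      (∑ k ∈ range N, x ^ k / k !) x := by
    refine (HasDerivAt.fun_sum fun k _ ↦ (hasDerivAt_pow k x).div_const (k ! : ℝ)).congr_deriv ?_
    rw [sum_range_succ']
    simp only [CharP.cast_eq_zero, zero_mul, zero_div, add_zero]
    refine sum_congr rfl fun k _ ↦ ?_
    rw [factorial_succ, cast_mul, add_tsub_cancel_right]
    field_simp
  refine (((hasDerivAt_neg x).exp).mul hsum).congr_deriv ?_
  rw [sum_range_succ]
  ring

lemma gammaMeasure_Iic_natCast_succ (N : ℕ) {r t : ℝ} (hr : 0 ≤ r) (ht : 0 ≤ t) :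
    gammaMeasure ((N + 1 : ℕ) : ℝ) r (Iic t)
      = ENNReal.ofReal (1 - exp (-(r * t)) * ∑ k ∈ range (N + 1), (r * t) ^ k / k !) := by
  set pdf : ℝ → ℝ := fun x ↦ r ^ (N + 1) * x ^ N / N ! * exp (-(r * x))
  have hpdf : ∀ x ∈ Ioc 0 t, gammaPDF ((N + 1 : ℕ) : ℝ) r x = ENNReal.ofReal (pdf x) := by
    intro x hx
    rw [gammaPDF_of_nonneg hx.1.le, Nat.cast_add_one, add_sub_cancel_right,
      Real.Gamma_nat_eq_factorial, ← Nat.cast_add_one, rpow_natCast, rpow_natCast]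
    congr 1
    ring
  have hderiv : ∀ x ∈ uIcc 0 t, HasDerivAt
      (fun x ↦ -(exp (-(r * x)) * ∑ k ∈ range (N + 1), (r * x) ^ k / k !)) (pdf x) x := by
    intro x _
    refine ((hasDerivAt_exp_neg_mul_sum_range N (r * x)).comp x
      ((hasDerivAt_id x).const_mul r)).neg.congr_deriv ?_
    simp only [pdf]
    ring
  have hcont : Continuous pdf := by fun_prop
  rw [gammaMeasure, withDensity_apply _ measurableSet_Iic,
    lintegral_Iic_eq_lintegral_Iio_add_Icc _ ht, lintegral_gammaPDF_of_nonpos le_rfl, zero_add,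
    setLIntegral_congr Ioc_ae_eq_Icc.symm, setLIntegral_congr_fun measurableSet_Ioc hpdf,
    ← ofReal_integral_eq_lintegral_ofReal (hcont.integrableOn_Ioc)
      ((ae_restrict_iff' measurableSet_Ioc).2 (ae_of_all _ fun x hx ↦ by
        have := hx.1.le; positivity)),
    ← intervalIntegral.integral_of_le ht,
    intervalIntegral.integral_eq_sub_of_hasDerivAt hderiv (hcont.intervalIntegrable 0 t)]
  simp [sum_range_succ', neg_add_eq_sub]

lemma hasSum_pow_div_factorial_mul_exp_neg_nat_add (M : ℕ) (t : ℝ) :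
    HasSum (fun j ↦ t ^ (M + j) / (M + j)! * exp (-t))
      (1 - exp (-t) * ∑ k ∈ range M, t ^ k / k !) := by
  have hexp := (NormedSpace.expSeries_div_hasSum_exp t).mul_right (exp (-t))
  rw [← exp_eq_exp_ℝ, ← exp_add, add_neg_cancel, exp_zero,
    ← hasSum_nat_add_iff' M, ← sum_mul] at hexp
  simpa only [add_comm _ M, mul_comm _ (exp (-t))] using hexp

lemma gammaMeasure_Iic_eq_tsum {M : ℕ} (hM : 0 < M) {r t : ℝ} (hr : 0 ≤ r) (ht : 0 ≤ t) :
    gammaMeasure M r (Iic t)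
      = ∑' j, ENNReal.ofReal ((r * t) ^ (M + j) / (M + j)! * exp (-(r * t))) := by
  obtain ⟨N, rfl⟩ := Nat.exists_eq_add_of_le' hM
  have hrt : 0 ≤ r * t := mul_nonneg hr ht
  have htail := hasSum_pow_div_factorial_mul_exp_neg_nat_add (N + 1) (r * t)
  rw [gammaMeasure_Iic_natCast_succ N hr ht, ← htail.tsum_eq,
    ENNReal.ofReal_tsum_of_nonneg (fun j ↦ by positivity) htail.summable]

lemma ProbabilityTheory.IndepFun.measure_le_eq_lintegral {Ω α : Type*} [MeasurableSpace Ω]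
    [MeasurableSpace α] {μ : Measure Ω} [IsFiniteMeasure μ] {X : Ω → α} {Y : Ω → ℝ}
    (hX : Measurable X) (hY : Measurable Y) (hXY : IndepFun X Y μ) {f : α → ℝ}
    (hf : Measurable f) :
    μ {ω | Y ω ≤ f (X ω)} = ∫⁻ ω, μ.map Y (Iic (f (X ω))) ∂μ := by
  have hS : MeasurableSet {p : α × ℝ | p.2 ≤ f p.1} :=
    measurableSet_le measurable_snd (hf.comp measurable_fst)
  rw [show {ω | Y ω ≤ f (X ω)} = (fun ω ↦ (X ω, Y ω)) ⁻¹' {p | p.2 ≤ f p.1} from rfl,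
    ← Measure.map_apply (hX.prodMk hY) hS,
    (indepFun_iff_map_prod_eq_prod_map_map hX.aemeasurable hY.aemeasurable).1 hXY,
    Measure.prod_apply hS, lintegral_map (measurable_measure_prodMk_left hS) hX]
  rfl

lemma ENNReal.hasSum_toReal_tsum_ofReal {ι : Type*} {f : ι → ℝ} (hf : ∀ i, 0 ≤ f i)
    (hsum : ∑' i, ENNReal.ofReal (f i) ≠ ⊤) :
    HasSum f (∑' i, ENNReal.ofReal (f i)).toReal := by
  have h := ENNReal.hasSum_toReal hsum
  simp only [ENNReal.toReal_ofReal (hf _)] at h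
  rwa [ENNReal.tsum_toReal_eq fun _ ↦ ENNReal.ofReal_ne_top,
    tsum_congr fun i ↦ ENNReal.toReal_ofReal (hf i)]

/-- If `g ~ Gamma(M,1)` (integer `M ≥ 1`) is independent of a nonnegative random
variable `I` with all moments `E[I^n e^{-sI}]` finite, then for `s > 0` the outage
probability satisfies `Pr(g ≤ s·I) = ∑_{n=M}^∞ (s^n/n!) E[I^n e^{-sI}]`, where the
series converges. -/
theorem outage_series (Ω : Type*) [MeasurableSpace Ω] (μ : Measure Ω)
    [IsProbabilityMeasure μ] (M : ℕ) (hM : 1 ≤ M) (s : ℝ) (hs : 0 < s)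
    (g I : Ω → ℝ) (hgm : Measurable g) (hIm : Measurable I)
    (hI : ∀ ω, 0 ≤ I ω)
    (hindep : IndepFun g I μ)
    (hg : μ.map g = gammaMeasure (M : ℝ) 1)
    (hint : ∀ n : ℕ, Integrable (fun ω => I ω ^ n * Real.exp (-s * I ω)) μ) :
    Summable (fun j : ℕ =>
        s ^ (M + j) / (Nat.factorial (M + j))
          * ∫ ω, I ω ^ (M + j) * Real.exp (-s * I ω) ∂μ) ∧
    (μ {ω | g ω ≤ s * I ω}).toReal
      = ∑' j : ℕ, s ^ (M + j) / (Nat.factorial (M + j))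
          * ∫ ω, I ω ^ (M + j) * Real.exp (-s * I ω) ∂μ := by
  have hmoment_nonneg : ∀ n ω, 0 ≤ I ω ^ n * exp (-s * I ω) := fun n ω ↦ by
    have := hI ω; positivity
  have hcdf : ∀ ω, gammaMeasure M 1 (Iic (s * I ω))
      = ∑' j, ENNReal.ofReal (s ^ (M + j) / (M + j)! * (I ω ^ (M + j) * exp (-s * I ω))) := by
    intro ω
    rw [gammaMeasure_Iic_eq_tsum hM zero_le_one (mul_nonneg hs.le (hI ω)), one_mul]
    refine tsum_congr fun j ↦ congrArg ENNReal.ofReal ?_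
    rw [mul_pow, neg_mul]
    ring
  have hprob : μ {ω | g ω ≤ s * I ω} = ∑' j, ENNReal.ofReal
      (s ^ (M + j) / (M + j)! * ∫ ω, I ω ^ (M + j) * exp (-s * I ω) ∂μ) := by
    rw [hindep.symm.measure_le_eq_lintegral hIm hgm (measurable_const_mul s), hg]
    simp_rw [hcdf]
    rw [lintegral_tsum fun j ↦ by fun_prop]
    refine tsum_congr fun j ↦ ?_
    rw [← integral_const_mul, ofReal_integral_eq_lintegral_ofReal ((hint _).const_mul _)
      (ae_of_all _ fun ω ↦ mul_nonneg (by positivity) (hmoment_nonneg _ ω))]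
  have hsum := ENNReal.hasSum_toReal_tsum_ofReal
    (fun j ↦ mul_nonneg (by positivity) (integral_nonneg (hmoment_nonneg _)))
    (hprob ▸ measure_ne_top μ _)
  rw [← hprob] at hsum
  exact ⟨hsum.summable, hsum.tsum_eq.symm⟩
end

section
/- Let Z₁, Z₂ be independent with densities f_{Z_j}(z) = 2πλ_j z e^{−πλ_j z²} (nearest-point distances of independent PPPs of intensities λ₁, λ₂). For α₁, α₂ > 2 and P₁, P₂ > 0, conditioned on the event E₁ = {P₁ Z₁^{−α₁} ≥ P₂ Z₂^{−α₂}} (which has probability A₁ > 0), the conditional density of Z₁ is f_{Y₁}(y) = (2πλ₁/A₁) y exp( −π( λ₁ y² + λ₂ (P₂/P₁)^{2/α₂} y^{2α₁/α₂} ) ). -/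
/-!
Given `Z₁ = x > 0`, the macro tier wins exactly when `Z₂ ≥ r(x) = ((P₂/P₁) x^α₁)^(1/α₂)`, an event
of probability `exp(-πλ₂ r(x)²) = exp(-πλ₂ (P₂/P₁)^(2/α₂) x^(2α₁/α₂))`. By independence,
`μ(E₁ ∩ {Z₁ ≤ t})` is the integral of this conditional probability against the law of `Z₁`, whose
density `2πλ₁ x exp(-πλ₁ x²)` is minus the derivative of its survival function.
-/

open MeasureTheory ProbabilityTheory Set
open scoped Real ENNReal

theorem mul_rpow_neg_le_mul_rpow_neg_iff {P₁ P₂ α₁ α₂ x z : ℝ} (hP₁ : 0 < P₁) (hP₂ : 0 ≤ P₂)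
    (hα₂ : 0 < α₂) (hx : 0 < x) (hz : 0 < z) :
    P₂ * z ^ (-α₂) ≤ P₁ * x ^ (-α₁) ↔ (P₂ / P₁ * x ^ α₁) ^ α₂⁻¹ ≤ z := by
  rw [Real.rpow_neg hz.le, Real.rpow_neg hx.le, ← div_eq_mul_inv, ← div_eq_mul_inv,
    div_le_div_iff₀ (by positivity) (by positivity),
    Real.rpow_inv_le_iff_of_pos (by positivity) hz.le hα₂, div_mul_eq_mul_div, div_le_iff₀ hP₁,
    mul_comm (z ^ α₂)]

theorem sq_rpow_inv_mul_rpow {p α₁ α₂ x : ℝ} (hp : 0 ≤ p) (hx : 0 ≤ x) :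
    ((p * x ^ α₁) ^ α₂⁻¹) ^ 2 = p ^ (2 / α₂) * x ^ (2 * α₁ / α₂) := by
  rw [← Real.rpow_mul_natCast (by positivity), Real.mul_rpow hp (by positivity),
    ← Real.rpow_mul hx]
  ring_nf

theorem hasDerivAt_neg_exp_neg_mul_sq (c z : ℝ) :
    HasDerivAt (fun z => -Real.exp (-(c * z ^ 2))) (2 * c * z * Real.exp (-(c * z ^ 2))) z := by
  refine ((((hasDerivAt_pow 2 z).const_mul c).fun_neg.exp).fun_neg).congr_deriv ?_
  push_cast
  ring

theorem integral_mul_exp_neg_mul_sq (c a b : ℝ) :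
    ∫ z in a..b, 2 * c * z * Real.exp (-(c * z ^ 2))
      = Real.exp (-(c * a ^ 2)) - Real.exp (-(c * b ^ 2)) := by
  rw [intervalIntegral.integral_eq_sub_of_hasDerivAt
    (fun z _ => hasDerivAt_neg_exp_neg_mul_sq c z)
    (Continuous.intervalIntegrable (by fun_prop) a b)]
  ring

theorem setLIntegral_Ioc_mul_exp_neg_mul_sq {c a b : ℝ} (hc : 0 ≤ c) (ha : 0 ≤ a) (hab : a ≤ b) :
    ∫⁻ z in Ioc a b, ENNReal.ofReal (2 * c * z * Real.exp (-(c * z ^ 2)))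
      = ENNReal.ofReal (Real.exp (-(c * a ^ 2)) - Real.exp (-(c * b ^ 2))) := by
  rw [← ofReal_integral_eq_lintegral_ofReal (Continuous.integrableOn_Ioc (by fun_prop))
      ((ae_restrict_mem measurableSet_Ioc).mono fun z hz => by
        have : 0 ≤ z := ha.trans hz.1.le
        positivity),
    ← intervalIntegral.integral_of_le hab, integral_mul_exp_neg_mul_sq]

section

variable {Ω : Type*} [MeasurableSpace Ω] {μ : Measure Ω}

theorem map_eq_withDensity_of_measure_lt [IsFiniteMeasure μ] {Z : Ω → ℝ} (hZ : Measurable Z)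
    (hZpos : ∀ ω, 0 < Z ω) {c : ℝ} (hc : 0 ≤ c)
    (hlaw : ∀ z, 0 ≤ z → μ {ω | z < Z ω} = ENNReal.ofReal (Real.exp (-(c * z ^ 2)))) :
    μ.map Z = (volume.restrict (Ioi 0)).withDensity
      fun z => ENNReal.ofReal (2 * c * z * Real.exp (-(c * z ^ 2))) := by
  refine Measure.ext_of_Ioc _ _ fun a b _ => ?_
  rw [Measure.map_apply hZ measurableSet_Ioc, withDensity_apply _ measurableSet_Ioc,
    Measure.restrict_restrict measurableSet_Ioc, Ioc_inter_Ioi]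
  have hpre : Z ⁻¹' Ioc a b = Z ⁻¹' Ioc (a ⊔ 0) b := by
    ext ω
    simp [hZpos ω]
  rw [hpre]
  rcases le_or_gt b (a ⊔ 0) with hb | hb
  · simp [Ioc_eq_empty_of_le hb]
  have ha : 0 ≤ a ⊔ 0 := le_sup_right
  have hdiff : Z ⁻¹' Ioc (a ⊔ 0) b = {ω | a ⊔ 0 < Z ω} \ {ω | b < Z ω} := by
    ext ω
    simp
  rw [setLIntegral_Ioc_mul_exp_neg_mul_sq hc ha hb.le, hdiff,
    measure_sdiff (show {ω | b < Z ω} ⊆ {ω | a ⊔ 0 < Z ω} from fun ω hω => hb.trans hω)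
      (measurableSet_lt measurable_const hZ).nullMeasurableSet (measure_ne_top μ _),
    hlaw _ ha, hlaw _ (ha.trans hb.le), ENNReal.ofReal_sub _ (Real.exp_nonneg _)]

theorem measure_le_eq_measure_lt {Z : Ω → ℝ} (hZ : Measurable Z) (hac : μ.map Z ≪ volume) (s : ℝ) :
    μ {ω | s ≤ Z ω} = μ {ω | s < Z ω} := by
  have h := measure_congr (hac.ae_eq (Ioi_ae_eq_Ici (a := s)))
  rwa [Measure.map_apply hZ measurableSet_Ioi, Measure.map_apply hZ measurableSet_Ici,
    eq_comm] at h

theorem ProbabilityTheory.IndepFun.measure_preimage_prodMk_inter_eq_setLIntegral {α β : Type*}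
    [MeasurableSpace α] [MeasurableSpace β] [IsFiniteMeasure μ]
    {X : Ω → α} {Y : Ω → β} (hX : Measurable X) (hY : Measurable Y) (hXY : IndepFun X Y μ)
    {S : Set (α × β)} (hS : MeasurableSet S) {T : Set α} (hT : MeasurableSet T) :
    μ ((fun ω => (X ω, Y ω)) ⁻¹' S ∩ X ⁻¹' T)
      = ∫⁻ x in T, μ (Y ⁻¹' (Prod.mk x ⁻¹' S)) ∂μ.map X := by
  have hST : MeasurableSet (S ∩ Prod.fst ⁻¹' T) := hS.inter (measurable_fst hT)
  change μ ((fun ω => (X ω, Y ω)) ⁻¹' (S ∩ Prod.fst ⁻¹' T)) = _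
  rw [← Measure.map_apply (hX.prodMk hY) hST,
    (indepFun_iff_map_prod_eq_prod_map_map hX.aemeasurable hY.aemeasurable).mp hXY,
    Measure.prod_apply hST, ← lintegral_indicator hT]
  refine lintegral_congr fun x => ?_
  rw [Measure.map_apply hY (measurable_prodMk_left hST)]
  by_cases hx : x ∈ T <;> simp [hx, preimage]

theorem measure_mul_rpow_neg_le_of_measure_lt [IsFiniteMeasure μ] {Z : Ω → ℝ}
    (hZ : Measurable Z) (hZpos : ∀ ω, 0 < Z ω) {c : ℝ} (hc : 0 ≤ c)
    (hlaw : ∀ z, 0 ≤ z → μ {ω | z < Z ω} = ENNReal.ofReal (Real.exp (-(c * z ^ 2))))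
    {P₁ P₂ α₁ α₂ x : ℝ} (hP₁ : 0 < P₁) (hP₂ : 0 ≤ P₂) (hα₂ : 0 < α₂) (hx : 0 < x) :
    μ {ω | P₂ * Z ω ^ (-α₂) ≤ P₁ * x ^ (-α₁)}
      = ENNReal.ofReal (Real.exp (-(c * ((P₂ / P₁) ^ (2 / α₂) * x ^ (2 * α₁ / α₂))))) := by
  set r := (P₂ / P₁ * x ^ α₁) ^ α₂⁻¹
  have hevent : {ω | P₂ * Z ω ^ (-α₂) ≤ P₁ * x ^ (-α₁)} = {ω | r ≤ Z ω} :=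
    ext fun ω => mul_rpow_neg_le_mul_rpow_neg_iff hP₁ hP₂ hα₂ hx (hZpos ω)
  have hac : μ.map Z ≪ volume := by
    rw [map_eq_withDensity_of_measure_lt hZ hZpos hc hlaw]
    exact (withDensity_absolutelyContinuous _ _).trans
      Measure.restrict_le_self.absolutelyContinuous
  rw [hevent, measure_le_eq_measure_lt hZ hac, hlaw r (by positivity),
    sq_rpow_inv_mul_rpow (by positivity) hx.le]

theorem measure_mul_rpow_neg_le_inter_le_eq_setLIntegral [IsFiniteMeasure μ]
    {P₁ P₂ α₁ α₂ lam₁ lam₂ : ℝ} (hP₁ : 0 < P₁) (hP₂ : 0 ≤ P₂) (hα₂ : 0 < α₂) (hlam₁ : 0 ≤ lam₁)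
    (hlam₂ : 0 ≤ lam₂) {Z₁ Z₂ : Ω → ℝ} (hZ₁m : Measurable Z₁) (hZ₂m : Measurable Z₂)
    (hZ₁pos : ∀ ω, 0 < Z₁ ω) (hZ₂pos : ∀ ω, 0 < Z₂ ω) (hindep : IndepFun Z₁ Z₂ μ)
    (hZ₁law : ∀ z : ℝ, 0 ≤ z →
      μ {ω | z < Z₁ ω} = ENNReal.ofReal (Real.exp (-(π * lam₁ * z ^ 2))))
    (hZ₂law : ∀ z : ℝ, 0 ≤ z →
      μ {ω | z < Z₂ ω} = ENNReal.ofReal (Real.exp (-(π * lam₂ * z ^ 2)))) (t : ℝ) :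
    μ ({ω | P₂ * Z₂ ω ^ (-α₂) ≤ P₁ * Z₁ ω ^ (-α₁)} ∩ {ω | Z₁ ω ≤ t})
      = ∫⁻ y in Ioc 0 t, ENNReal.ofReal (2 * π * lam₁ * y *
          Real.exp (-(π * (lam₁ * y ^ 2 + lam₂ * (P₂ / P₁) ^ (2 / α₂) * y ^ (2 * α₁ / α₂))))) := by
  set c := (P₂ / P₁) ^ (2 / α₂)
  set β := 2 * α₁ / α₂
  have hS : MeasurableSet {p : ℝ × ℝ | P₂ * p.2 ^ (-α₂) ≤ P₁ * p.1 ^ (-α₁)} :=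
    measurableSet_le (by fun_prop) (by fun_prop)
  have hZ₁pos_ae : ∀ᵐ x ∂μ.map Z₁, 0 < x :=
    (ae_map_iff hZ₁m.aemeasurable measurableSet_Ioi).2 (ae_of_all _ hZ₁pos)
  calc μ ({ω | P₂ * Z₂ ω ^ (-α₂) ≤ P₁ * Z₁ ω ^ (-α₁)} ∩ {ω | Z₁ ω ≤ t})
      = ∫⁻ x in Iic t, μ {ω | P₂ * Z₂ ω ^ (-α₂) ≤ P₁ * x ^ (-α₁)} ∂μ.map Z₁ :=
        hindep.measure_preimage_prodMk_inter_eq_setLIntegral hZ₁m hZ₂m hS measurableSet_Iic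
    _ = ∫⁻ x in Iic t, ENNReal.ofReal (Real.exp (-(π * lam₂ * (c * x ^ β)))) ∂μ.map Z₁ :=
        setLIntegral_congr_fun_ae measurableSet_Iic <| hZ₁pos_ae.mono fun x hx _ =>
          measure_mul_rpow_neg_le_of_measure_lt hZ₂m hZ₂pos (by positivity) hZ₂law hP₁ hP₂ hα₂ hx
    _ = ∫⁻ x in Ioc 0 t, ENNReal.ofReal (2 * (π * lam₁) * x * Real.exp (-(π * lam₁ * x ^ 2)))
          * ENNReal.ofReal (Real.exp (-(π * lam₂ * (c * x ^ β)))) := by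
        rw [map_eq_withDensity_of_measure_lt hZ₁m hZ₁pos (by positivity) hZ₁law,
          setLIntegral_withDensity_eq_setLIntegral_mul _ (by fun_prop) (by fun_prop)
            measurableSet_Iic, Measure.restrict_restrict measurableSet_Iic, inter_comm,
          Ioi_inter_Iic]
        rfl
    _ = _ := setLIntegral_congr_fun measurableSet_Ioc fun x (hx : 0 < x ∧ x ≤ t) => by
        have := hx.1
        rw [← ENNReal.ofReal_mul (by positivity), mul_assoc, ← Real.exp_add]
        ring_nf

end

theorem macro_serving_distance_density_general
    (Ω : Type*) [MeasurableSpace Ω] (μ : Measure Ω) [IsProbabilityMeasure μ]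
    (α₁ α₂ P₁ P₂ lam₁ lam₂ A₁ : ℝ)
    (hα₂ : 2 < α₂) (hP₁ : 0 < P₁) (hP₂ : 0 < P₂)
    (hlam₁ : 0 < lam₁) (hlam₂ : 0 < lam₂)
    (Z₁ Z₂ : Ω → ℝ) (hZ₁m : Measurable Z₁) (hZ₂m : Measurable Z₂)
    (hZ₁pos : ∀ ω, 0 < Z₁ ω) (hZ₂pos : ∀ ω, 0 < Z₂ ω)
    (hindep : IndepFun Z₁ Z₂ μ)
    (hZ₁law : ∀ z : ℝ, 0 ≤ z →
      μ {ω | z < Z₁ ω} = ENNReal.ofReal (Real.exp (-(π * lam₁ * z ^ 2))))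
    (hZ₂law : ∀ z : ℝ, 0 ≤ z →
      μ {ω | z < Z₂ ω} = ENNReal.ofReal (Real.exp (-(π * lam₂ * z ^ 2))))
    (hA₁pos : 0 < A₁) :
    ∀ t : ℝ, 0 ≤ t →
      (μ ({ω | P₂ * Z₂ ω ^ (-α₂) ≤ P₁ * Z₁ ω ^ (-α₁)} ∩ {ω | Z₁ ω ≤ t})).toReal / A₁
        = ∫ y in Set.Ioc (0 : ℝ) t,
            (2 * π * lam₁ / A₁) * y *
              Real.exp (-(π * (lam₁ * y ^ 2
                + lam₂ * (P₂ / P₁) ^ (2 / α₂) * y ^ (2 * α₁ / α₂)))) := by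
  intro t _
  have hnonneg : 0 ≤ᵐ[volume.restrict (Ioc 0 t)] fun y => 2 * π * lam₁ * y *
      Real.exp (-(π * (lam₁ * y ^ 2 + lam₂ * (P₂ / P₁) ^ (2 / α₂) * y ^ (2 * α₁ / α₂)))) :=
    (ae_restrict_mem measurableSet_Ioc).mono fun y (hy : 0 < y ∧ y ≤ t) => by
      have := hy.1
      positivity
  rw [measure_mul_rpow_neg_le_inter_le_eq_setLIntegral hP₁ hP₂.le (by linarith) hlam₁.le hlam₂.le
      hZ₁m hZ₂m hZ₁pos hZ₂pos hindep hZ₁law hZ₂law t,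
    ← integral_eq_lintegral_of_nonneg_ae hnonneg (by fun_prop), div_eq_iff hA₁pos.ne',
    ← integral_mul_const]
  refine setIntegral_congr_fun measurableSet_Ioc fun y _ => ?_
  field_simp

/-- Conditional serving-distance density of a macro-user: if `Z₁, Z₂` are independent
nearest-point distances of PPPs of intensities `λ₁, λ₂` (so `Pr(Z_j > z) = e^{-πλ_j z²}`),
then conditioned on the macro-association event
`E₁ = {P₁ Z₁^{-α₁} ≥ P₂ Z₂^{-α₂}}` (of probability `A₁ > 0`), the density of `Z₁` is
`f_{Y₁}(y) = (2πλ₁/A₁) y exp(-π(λ₁ y² + λ₂ (P₂/P₁)^{2/α₂} y^{2α₁/α₂}))`. -/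
theorem macro_serving_distance_density
    (Ω : Type*) [MeasurableSpace Ω] (μ : Measure Ω) [IsProbabilityMeasure μ]
    (α₁ α₂ P₁ P₂ lam₁ lam₂ A₁ : ℝ)
    (hα₁ : 2 < α₁) (hα₂ : 2 < α₂) (hP₁ : 0 < P₁) (hP₂ : 0 < P₂)
    (hlam₁ : 0 < lam₁) (hlam₂ : 0 < lam₂)
    (Z₁ Z₂ : Ω → ℝ) (hZ₁m : Measurable Z₁) (hZ₂m : Measurable Z₂)
    (hZ₁pos : ∀ ω, 0 < Z₁ ω) (hZ₂pos : ∀ ω, 0 < Z₂ ω)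
    (hindep : IndepFun Z₁ Z₂ μ)
    (hZ₁law : ∀ z : ℝ, 0 ≤ z →
      μ {ω | z < Z₁ ω} = ENNReal.ofReal (Real.exp (-(π * lam₁ * z ^ 2))))
    (hZ₂law : ∀ z : ℝ, 0 ≤ z →
      μ {ω | z < Z₂ ω} = ENNReal.ofReal (Real.exp (-(π * lam₂ * z ^ 2))))
    (hA₁ : μ {ω | P₂ * Z₂ ω ^ (-α₂) ≤ P₁ * Z₁ ω ^ (-α₁)} = ENNReal.ofReal A₁)
    (hA₁pos : 0 < A₁) :
    ∀ t : ℝ, 0 ≤ t →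
      (μ ({ω | P₂ * Z₂ ω ^ (-α₂) ≤ P₁ * Z₁ ω ^ (-α₁)} ∩ {ω | Z₁ ω ≤ t})).toReal / A₁
        = ∫ y in Set.Ioc (0 : ℝ) t,
            (2 * π * lam₁ / A₁) * y *
              Real.exp (-(π * (lam₁ * y ^ 2
                + lam₂ * (P₂ / P₁) ^ (2 / α₂) * y ^ (2 * α₁ / α₂)))) :=
  macro_serving_distance_density_general Ω μ α₁ α₂ P₁ P₂ lam₁ lam₂ A₁ hα₂ hP₁ hP₂ hlam₁ hlam₂ Z₁ Z₂
    hZ₁m hZ₂m hZ₁pos hZ₂pos hindep hZ₁law hZ₂law hA₁pos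
end
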